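/- For every T > 0 one has ẑ(T) > α + 1/2, the radicand (ẑ(T) + α − 1/2)² − 2g/α is positive, ẑ is differentiable at T, and ẑ'(T) = ẑ(T) − ẑ(T)² − 2·W(ẑ(T)). That is, ẑ solves the characteristic ordinary differential equation z' = z − z² − 2W(z). -/

import Mathlib

open Real MeasureTheory Filter

/-- `Σ = √(3α²/2 − 1/8)`. -/
noncomputable def Sg (α : ℝ) : ℝ := Real.sqrt (3 * α ^ 2 / 2 - 1 / 8)

/-- `C(T) = Σ·cosh(ΣT) + α·sinh(ΣT)`. -/
noncomputable def Cg (α : ℝ) (T : ℝ) : ℝ :=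
  Sg α * Real.cosh (Sg α * T) + α * Real.sinh (Sg α * T)

/-- The disk function `W(z)` of random cubic maps (with `g = α/4 − α³`). -/
noncomputable def Wdisk (α : ℝ) (z : ℝ) : ℝ :=
  (1 / 2) * (z - z ^ 2 + (z - α - 1 / 2)
    * Real.sqrt ((z + α - 1 / 2) ^ 2 - 2 * (α / 4 - α ^ 3) / α))

/-- The characteristic curve `ẑ(T) = α + 1/2 + Σ²/(sinh(ΣT)·C(T))`. -/
noncomputable def zhat (α : ℝ) (T : ℝ) : ℝ :=
  α + 1 / 2 + Sg α ^ 2 / (Real.sinh (Sg α * T) * Cg α T)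

/-!
Write `ẑ = α + 1/2 + u` with `u = Σ²/D`, `D(T) = sinh(ΣT)·C(T)`. The radicand of `W` at `ẑ` is
`u² + 4αu + 4Σ²`, and `cosh² = 1 + sinh²` gives the Riccati-type identity
`D'² = Σ⁴ + 4αΣ²D + 4Σ²D²`, i.e. the radicand equals `(D'/D)²`. Since `z − z² − 2W(z)` is
`−(z − α − 1/2)` times the square root of the radicand, the right-hand side of the equation at `ẑ`
is `−u·D'/D = −Σ²D'/D²`, which is `ẑ'`.
-/

noncomputable def zhatDen (α T : ℝ) : ℝ := Real.sinh (Sg α * T) * Cg α T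

noncomputable def zhatDenDeriv (α T : ℝ) : ℝ :=
  Sg α * (Sg α * (Real.cosh (Sg α * T) ^ 2 + Real.sinh (Sg α * T) ^ 2)
    + 2 * α * Real.sinh (Sg α * T) * Real.cosh (Sg α * T))

section

variable {α T : ℝ}

lemma one_div_twelve_lt_sq (h : 1 / (2 * Real.sqrt 3) < α) : 1 / 12 < α ^ 2 := by
  have hsq : (1 / (2 * Real.sqrt 3)) ^ 2 = 1 / 12 := by
    rw [div_pow, mul_pow, Real.sq_sqrt (by norm_num : (3 : ℝ) ≥ 0)]
    norm_num
  rw [← hsq]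
  exact pow_lt_pow_left₀ h (by positivity) (by norm_num)

lemma Sg_pos (h : 1 / 12 < α ^ 2) : 0 < Sg α :=
  Real.sqrt_pos.mpr (by linarith)

lemma Sg_sq (h : 1 / 12 ≤ α ^ 2) : Sg α ^ 2 = 3 * α ^ 2 / 2 - 1 / 8 :=
  Real.sq_sqrt (by linarith)

lemma zhat_eq (α T : ℝ) : zhat α T = α + 1 / 2 + Sg α ^ 2 / zhatDen α T := rfl

lemma zhatDen_pos (hα : 0 ≤ α) (hS : 0 < Sg α) (hT : 0 < T) : 0 < zhatDen α T := by
  have hs : 0 < Real.sinh (Sg α * T) := Real.sinh_pos_iff.mpr (mul_pos hS hT)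
  have hC : 0 < Cg α T := by
    unfold Cg
    have := Real.cosh_pos (Sg α * T)
    positivity
  exact mul_pos hs hC

lemma zhatDenDeriv_pos (hα : 0 ≤ α) (hS : 0 < Sg α) (hT : 0 ≤ T) : 0 < zhatDenDeriv α T := by
  have hs : 0 ≤ Real.sinh (Sg α * T) := Real.sinh_nonneg_iff.mpr (mul_nonneg hS.le hT)
  have hc := Real.cosh_pos (Sg α * T)
  unfold zhatDenDeriv
  positivity

lemma hasDerivAt_zhatDen (α T : ℝ) : HasDerivAt (zhatDen α) (zhatDenDeriv α T) T := by
  have hlin : HasDerivAt (fun t : ℝ => Sg α * t) (Sg α) T := by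
    simpa using (hasDerivAt_id T).const_mul (Sg α)
  have hC : HasDerivAt (Cg α) (Sg α * (Real.sinh (Sg α * T) * Sg α)
      + α * (Real.cosh (Sg α * T) * Sg α)) T :=
    (hlin.cosh.const_mul _).add (hlin.sinh.const_mul α)
  refine (hlin.sinh.mul hC).congr_deriv ?_
  unfold Cg zhatDenDeriv
  ring

lemma zhatDenDeriv_sq (α T : ℝ) :
    zhatDenDeriv α T ^ 2
      = Sg α ^ 4 + 4 * α * Sg α ^ 2 * zhatDen α T + 4 * Sg α ^ 2 * zhatDen α T ^ 2 := by
  unfold zhatDenDeriv zhatDen Cg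
  set S := Sg α
  set s := Real.sinh (S * T)
  set c := Real.cosh (S * T)
  linear_combination (S ^ 2 * (S ^ 2 * (c ^ 2 - s ^ 2 + 1) + 4 * α * S * s * c
    + 4 * α ^ 2 * s ^ 2)) * Real.cosh_sq (S * T)

lemma hasDerivAt_zhat (h : zhatDen α T ≠ 0) :
    HasDerivAt (zhat α) (-(Sg α ^ 2 * zhatDenDeriv α T) / zhatDen α T ^ 2) T := by
  have hdiv := (hasDerivAt_const T (Sg α ^ 2)).div (hasDerivAt_zhatDen α T) h
  have hfun : zhat α = fun t => α + 1 / 2 + Sg α ^ 2 / zhatDen α t := rfl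
  rw [hfun]
  exact ((hasDerivAt_const T (α + 1 / 2)).add hdiv).congr_deriv (by ring)

lemma radicand_eq (hα : α ≠ 0) (h : 1 / 12 ≤ α ^ 2) (z : ℝ) :
    (z + α - 1 / 2) ^ 2 - 2 * (α / 4 - α ^ 3) / α
      = (z - α - 1 / 2) ^ 2 + 4 * α * (z - α - 1 / 2) + 4 * Sg α ^ 2 := by
  rw [Sg_sq h]
  field_simp
  ring

lemma sub_sub_two_mul_Wdisk (α z : ℝ) :
    z - z ^ 2 - 2 * Wdisk α z
      = -((z - α - 1 / 2) * Real.sqrt ((z + α - 1 / 2) ^ 2 - 2 * (α / 4 - α ^ 3) / α)) := by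
  unfold Wdisk
  ring

lemma radicand_zhat_eq (hα : α ≠ 0) (h : 1 / 12 ≤ α ^ 2) (hD : zhatDen α T ≠ 0) :
    (zhat α T + α - 1 / 2) ^ 2 - 2 * (α / 4 - α ^ 3) / α
      = (zhatDenDeriv α T / zhatDen α T) ^ 2 := by
  rw [radicand_eq hα h, div_pow, zhatDenDeriv_sq, zhat_eq]
  field_simp
  ring

end

theorem stmt14_general (α : ℝ) (h1 : 1 / (2 * Real.sqrt 3) < α) :
    ∀ T : ℝ, 0 < T →
      α + 1 / 2 < zhat α T ∧
      0 < (zhat α T + α - 1 / 2) ^ 2 - 2 * (α / 4 - α ^ 3) / α ∧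
      DifferentiableAt ℝ (zhat α) T ∧
      deriv (zhat α) T = zhat α T - zhat α T ^ 2 - 2 * Wdisk α (zhat α T) := by
  intro T hT
  have hα : 0 < α := lt_trans (by positivity) h1
  have hα2 := one_div_twelve_lt_sq h1
  have hS := Sg_pos hα2
  have hD := zhatDen_pos hα.le hS hT
  have hD' := zhatDenDeriv_pos hα.le hS hT.le
  have hrad := radicand_zhat_eq hα.ne' hα2.le hD.ne'
  have hz := hasDerivAt_zhat hD.ne'
  refine ⟨?_, by rw [hrad]; positivity, hz.differentiableAt, ?_⟩
  · rw [zhat_eq]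
    linarith [div_pos (pow_pos hS 2) hD]
  · rw [hz.deriv, sub_sub_two_mul_Wdisk, hrad, Real.sqrt_sq (by positivity), zhat_eq]
    field_simp
    ring

/-- For `T > 0`: `ẑ(T) > α + 1/2`, the radicand is positive, `ẑ` is differentiable at `T`,
and `ẑ'(T) = ẑ(T) − ẑ(T)² − 2W(ẑ(T))`. -/
theorem stmt14 (α : ℝ) (h1 : 1 / (2 * Real.sqrt 3) < α) (h2 : α < 1 / 2) :
    ∀ T : ℝ, 0 < T →
      α + 1 / 2 < zhat α T ∧
      0 < (zhat α T + α - 1 / 2) ^ 2 - 2 * (α / 4 - α ^ 3) / α ∧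
      DifferentiableAt ℝ (zhat α) T ∧
      deriv (zhat α) T = zhat α T - zhat α T ^ 2 - 2 * Wdisk α (zhat α T) :=
  stmt14_general α h1
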